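/- If a non-increasing probability distribution P = (p_1,...,p_n) maximizes the average length L(P) = sum_{i=1}^{n-1} i·p_i + (n-1)p_n among all non-increasing distributions satisfying the AUH constraints, then p_i ≤ q_i for all i = 1,...,n-2, where q_i = sum_{j>i} p_j. -/

import Mathlib

open Finset

/-- A non-increasing probability distribution on symbols `1,…,n` satisfying the
anti-uniform Huffman (AUH) constraints `p i ≥ q (i+1) = ∑_{j > i+1} p j`. -/
def IsAUH (n : ℕ) (p : ℕ → ℝ) : Prop :=
  (∀ i ∈ Finset.Icc 1 n, 0 ≤ p i) ∧
  (∀ i j, 1 ≤ i → i ≤ j → j ≤ n → p j ≤ p i) ∧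
  (∑ i ∈ Finset.Icc 1 n, p i = 1) ∧
  (∀ i, 1 ≤ i → i ≤ n - 2 → ∑ j ∈ Finset.Icc (i + 2) n, p j ≤ p i)

/-- Average length of the anti-uniform code on `n` symbols. -/
noncomputable def avgLen (n : ℕ) (p : ℕ → ℝ) : ℝ :=
  ∑ i ∈ Finset.Icc 1 (n - 1), (i : ℝ) * p i + ((n : ℝ) - 1) * p n

/-!
If `p i > q i = ∑_{j > i} p j` for some `i ≤ n - 2`, move the mass `ε = (p i - q i) / 2` from
symbol `i` to symbol `i + 1` (`transfer p i ε`). Since `p (i + 1) ≤ q i`, the result is still non-increasing, and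
the only AUH constraint whose tail gains mass is the one at `i - 1`, where `q i + ε ≤ p i - ε`
still leaves room. Both symbols have codeword length `l = i`, resp. `i + 1 ≤ n - 1`, so the
average length grows by `ε`, contradicting maximality.
-/

def transfer (p : ℕ → ℝ) (i : ℕ) (ε : ℝ) (j : ℕ) : ℝ :=
  p j - (if j = i then ε else 0) + (if j = i + 1 then ε else 0)

section Transfer

variable {p : ℕ → ℝ} {i : ℕ} {ε : ℝ}

@[simp]
lemma transfer_self : transfer p i ε i = p i - ε := by
  simp [transfer]

@[simp]
lemma transfer_succ : transfer p i ε (i + 1) = p (i + 1) + ε := by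
  simp [transfer]

lemma transfer_of_ne {j : ℕ} (hi : j ≠ i) (hs : j ≠ i + 1) : transfer p i ε j = p j := by
  simp [transfer, hi, hs]

lemma transfer_le_of_ne_succ (hε : 0 ≤ ε) {j : ℕ} (hj : j ≠ i + 1) :
    transfer p i ε j ≤ p j := by
  simp only [transfer, hj, if_false]
  split_ifs <;> linarith

lemma le_transfer_of_ne (hε : 0 ≤ ε) {j : ℕ} (hj : j ≠ i) : p j ≤ transfer p i ε j := by
  simp only [transfer, hj, if_false]
  split_ifs <;> linarith

lemma sum_mul_transfer (w : ℕ → ℝ) (s : Finset ℕ) :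
    ∑ j ∈ s, w j * transfer p i ε j =
      ∑ j ∈ s, w j * p j - (if i ∈ s then w i * ε else 0) +
        (if i + 1 ∈ s then w (i + 1) * ε else 0) := by
  simp only [transfer, mul_add, mul_sub, mul_ite, mul_zero, sum_add_distrib, sum_sub_distrib,
    sum_ite_eq']

lemma sum_transfer (s : Finset ℕ) :
    ∑ j ∈ s, transfer p i ε j =
      ∑ j ∈ s, p j - (if i ∈ s then ε else 0) + (if i + 1 ∈ s then ε else 0) := by
  simpa using sum_mul_transfer (fun _ ↦ 1) s

lemma antitone_transfer {n : ℕ} (hmono : ∀ a b, 1 ≤ a → a ≤ b → b ≤ n → p b ≤ p a)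
    (hε : 0 ≤ ε) (hstep : p (i + 1) + ε ≤ p i - ε) :
    ∀ a b, 1 ≤ a → a ≤ b → b ≤ n → transfer p i ε b ≤ transfer p i ε a := by
  intro a b ha hab hbn
  rcases eq_or_ne b (i + 1) with rfl | hb
  · rcases eq_or_ne a (i + 1) with rfl | ha'
    · rfl
    rcases eq_or_ne a i with rfl | ha''
    · simpa using hstep
    calc transfer p i ε (i + 1) ≤ p i := by rw [transfer_succ]; linarith
      _ ≤ p a := hmono a i ha (by omega) (by omega)
      _ = transfer p i ε a := (transfer_of_ne ha'' ha').symm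
  rcases eq_or_ne a i with rfl | ha'
  · rcases eq_or_ne b a with rfl | hba
    · rfl
    calc transfer p a ε b ≤ p b := transfer_le_of_ne_succ hε hb
      _ ≤ p (a + 1) := hmono (a + 1) b (by omega) (by omega) hbn
      _ ≤ transfer p a ε a := by rw [transfer_self]; linarith
  calc transfer p i ε b ≤ p b := transfer_le_of_ne_succ hε hb
    _ ≤ p a := hmono a b ha hab hbn
    _ ≤ transfer p i ε a := le_transfer_of_ne hε ha'

lemma avgLen_transfer {n : ℕ} (hi : 1 ≤ i) (hin : i + 2 ≤ n) :
    avgLen n (transfer p i ε) = avgLen n p + ε := by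
  rw [avgLen, avgLen, sum_mul_transfer (fun j ↦ (j : ℝ)), transfer_of_ne (by omega) (by omega),
    if_pos (mem_Icc.2 ⟨hi, by omega⟩), if_pos (mem_Icc.2 ⟨by omega, by omega⟩)]
  push_cast
  ring

end Transfer

section AUH

variable {n : ℕ} {p : ℕ → ℝ}

lemma IsAUH.sum_Icc_nonneg (hp : IsAUH n p) {a : ℕ} (ha : 1 ≤ a) :
    0 ≤ ∑ j ∈ Icc a n, p j :=
  sum_nonneg fun j hj ↦ hp.1 j (by simp only [mem_Icc] at hj ⊢; omega)

lemma IsAUH.le_sum_Icc_succ (hp : IsAUH n p) {i : ℕ} (hin : i + 1 ≤ n) :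
    p (i + 1) ≤ ∑ j ∈ Icc (i + 1) n, p j := by
  rw [← add_sum_Ioc_eq_sum_Icc hin, ← Icc_add_one_left_eq_Ioc]
  linarith [hp.sum_Icc_nonneg (a := i + 1 + 1) (by omega)]

lemma IsAUH.sum_Icc_succ_le (hp : IsAUH n p) {i : ℕ} (hin : i + 1 ≤ n) :
    ∑ j ∈ Icc (i + 2) n, p j ≤ ∑ j ∈ Icc (i + 1) n, p j := by
  change ∑ j ∈ Icc (i + 1 + 1) n, p j ≤ _
  rw [← add_sum_Ioc_eq_sum_Icc hin, ← Icc_add_one_left_eq_Ioc]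
  linarith [hp.1 (i + 1) (by simp only [mem_Icc]; omega)]

lemma IsAUH.transfer {i : ℕ} {ε : ℝ} (hp : IsAUH n p) (hi : 1 ≤ i) (hin : i + 2 ≤ n)
    (hε : 0 ≤ ε) (hgap : ∑ j ∈ Icc (i + 1) n, p j + 2 * ε ≤ p i) :
    IsAUH n (transfer p i ε) := by
  have hq := hp.sum_Icc_nonneg (a := i + 1) (by omega)
  have hsucc := hp.le_sum_Icc_succ (i := i) (by omega)
  have hsucc_le := hp.sum_Icc_succ_le (i := i) (by omega)
  obtain ⟨hnonneg, hmono, hsum, hauh⟩ := hp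
  refine ⟨fun j hj ↦ ?_, antitone_transfer hmono hε (by linarith), ?_, fun k hk hkn ↦ ?_⟩
  · rcases eq_or_ne j i with rfl | hji
    · rw [transfer_self]; linarith
    · exact (hnonneg j hj).trans (le_transfer_of_ne hε hji)
  · rw [sum_transfer, hsum, if_pos (mem_Icc.2 ⟨hi, by omega⟩),
      if_pos (mem_Icc.2 ⟨by omega, by omega⟩)]
    ring
  have hpk := hauh k hk hkn
  rw [sum_transfer]
  rcases lt_trichotomy (k + 1) i with hki | rfl | hki
  · rw [if_pos (by simp only [mem_Icc]; omega), if_pos (by simp only [mem_Icc]; omega),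
      transfer_of_ne (by omega) (by omega)]
    linarith
  · rw [if_neg (by simp only [mem_Icc]; omega), if_pos (by simp only [mem_Icc]; omega),
      transfer_of_ne (by omega) (by omega)]
    linarith [hmono k (k + 1) hk (by omega) (by omega)]
  · rw [if_neg (by simp only [mem_Icc]; omega), if_neg (by simp only [mem_Icc]; omega)]
    rcases eq_or_ne k i with rfl | hki'
    · rw [transfer_self]
      linarith
    · linarith [le_transfer_of_ne (p := p) hε hki']

end AUH

theorem maxAvgLen_le_node (n : ℕ) (p : ℕ → ℝ) (hp : IsAUH n p)
    (hmax : ∀ p' : ℕ → ℝ, IsAUH n p' → avgLen n p' ≤ avgLen n p) :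
    ∀ i, 1 ≤ i → i ≤ n - 2 → p i ≤ ∑ j ∈ Finset.Icc (i + 1) n, p j := by
  intro i hi hin
  by_contra! hgt
  set ε := (p i - ∑ j ∈ Icc (i + 1) n, p j) / 2 with hε_def
  have hε : 0 < ε := by linarith
  have hp' : IsAUH n (transfer p i ε) := hp.transfer hi (by omega) hε.le (by linarith)
  have hlen := hmax _ hp'
  rw [avgLen_transfer hi (by omega)] at hlen
  linarith
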